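/- Let X, Y, Z be jointly distributed random variables on finite sets 𝒳, 𝒴, 𝒵, and suppose the loss function satisfies |L(y,a)| ≤ M for all y and a. If I_{χ²}(Y;Z|X) ≤ ε² for some ε ≥ 0, then for any choice of Bayes actions, I_L(Y;Z|X) ≤ 2Mε·√(|𝒳|·|𝒵|). -/
import Mathlib


open Finset

open Classical in
/-- Probability of an event under a pmf `p` on a finite sample space. -/
noncomputable def pr {Ω : Type*} [Fintype Ω] (p : Ω → ℝ) (E : Ω → Prop) : ℝ :=
  ∑ ω, if E ω then p ω else 0

/-- Conditional distribution of a random variable `Y` given an event `E`. -/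
noncomputable def condDist {Ω 𝒴 : Type*} [Fintype Ω] (p : Ω → ℝ) (Y : Ω → 𝒴)
    (E : Ω → Prop) : 𝒴 → ℝ :=
  fun y => pr p (fun ω => Y ω = y ∧ E ω) / pr p E

/-- Neyman's χ²-divergence `D_{χ²}(P‖Q)`.  (In Lean, `x / 0 = 0`, which realizes
the convention `0²/0 = 0` under absolute continuity.) -/
noncomputable def chiSqDiv {𝒴 : Type*} [Fintype 𝒴] (P Q : 𝒴 → ℝ) : ℝ :=
  ∑ y, (P y - Q y) ^ 2 / Q y

/-- χ²-conditional mutual information `I_{χ²}(Y;Z|X)`. -/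
noncomputable def chiSqCMI {Ω 𝒳 𝒴 𝒵 : Type*} [Fintype Ω] [Fintype 𝒳] [Fintype 𝒴]
    [Fintype 𝒵] (p : Ω → ℝ) (Y : Ω → 𝒴) (Z : Ω → 𝒵) (X : Ω → 𝒳) : ℝ :=
  ∑ x, ∑ z, pr p (fun ω => X ω = x ∧ Z ω = z) *
    chiSqDiv (condDist p Y (fun ω => X ω = x ∧ Z ω = z))
      (condDist p Y (fun ω => X ω = x))

/-- Expected loss `E_{Y∼P}[L(Y,a)]`. -/
noncomputable def expLoss {𝒴 𝒜 : Type*} [Fintype 𝒴] (L : 𝒴 → 𝒜 → ℝ) (P : 𝒴 → ℝ)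
    (a : 𝒜) : ℝ :=
  ∑ y, P y * L y a

/-- `b` selects, for every probability mass function `P` on `𝒴`, a Bayes action `b P`. -/
def IsBayesSelector {𝒴 𝒜 : Type*} [Fintype 𝒴] (L : 𝒴 → 𝒜 → ℝ) (b : (𝒴 → ℝ) → 𝒜) : Prop :=
  ∀ P : 𝒴 → ℝ, (∀ y, 0 ≤ P y) → (∑ y, P y) = 1 →
    ∀ a : 𝒜, expLoss L P (b P) ≤ expLoss L P a

/-- The `L`-divergence `D_L(P‖Q) = E_{Y∼P}[L(Y,a_Q)] − E_{Y∼P}[L(Y,a_P)]`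
for the choice `a_P = b P`, `a_Q = b Q` of Bayes actions. -/
noncomputable def Ldiv {𝒴 𝒜 : Type*} [Fintype 𝒴] (L : 𝒴 → 𝒜 → ℝ) (b : (𝒴 → ℝ) → 𝒜)
    (P Q : 𝒴 → ℝ) : ℝ :=
  expLoss L P (b Q) - expLoss L P (b P)

/-- The `L`-conditional mutual information
`I_L(Y;Z|X) = Σ_{x,z} P_{X,Z}(x,z) D_L(P_{Y|X=x,Z=z} ‖ P_{Y|X=x})`. -/
noncomputable def LCMI {Ω 𝒳 𝒴 𝒵 𝒜 : Type*} [Fintype Ω] [Fintype 𝒳] [Fintype 𝒴]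
    [Fintype 𝒵] (L : 𝒴 → 𝒜 → ℝ) (b : (𝒴 → ℝ) → 𝒜) (p : Ω → ℝ)
    (Y : Ω → 𝒴) (Z : Ω → 𝒵) (X : Ω → 𝒳) : ℝ :=
  ∑ x, ∑ z, pr p (fun ω => X ω = x ∧ Z ω = z) *
    Ldiv L b (condDist p Y (fun ω => X ω = x ∧ Z ω = z))
      (condDist p Y (fun ω => X ω = x))


section AuxLemmas

open Classical

variable {Ω 𝒳 𝒴 𝒵 𝒜 : Type*} [Fintype Ω] [Fintype 𝒳] [Fintype 𝒴] [Fintype 𝒵]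

lemma pr_nonneg' {p : Ω → ℝ} (hp : ∀ ω, 0 ≤ p ω) (E : Ω → Prop) : 0 ≤ pr p E := by
  refine Finset.sum_nonneg fun ω _ => ?_
  split <;> simp [hp ω]

lemma pr_mono' {p : Ω → ℝ} (hp : ∀ ω, 0 ≤ p ω) {E F : Ω → Prop} (h : ∀ ω, E ω → F ω) :
    pr p E ≤ pr p F := by
  refine Finset.sum_le_sum fun ω _ => ?_
  by_cases hE : E ω
  · simp [hE, h ω hE]
  · simp only [hE, if_false]
    split <;> simp [hp ω]

lemma pr_eq_zero_of {p : Ω → ℝ} (hp : ∀ ω, 0 ≤ p ω) {E F : Ω → Prop}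
    (h : ∀ ω, E ω → F ω) (hF : pr p F = 0) : pr p E = 0 :=
  le_antisymm (hF ▸ pr_mono' hp h) (pr_nonneg' hp E)

lemma sum_pr_and {p : Ω → ℝ} (Y : Ω → 𝒴) (E : Ω → Prop) :
    ∑ y, pr p (fun ω => Y ω = y ∧ E ω) = pr p E := by
  unfold pr
  rw [Finset.sum_comm]
  refine Finset.sum_congr rfl fun ω _ => ?_
  by_cases hE : E ω
  · simp [hE, Finset.sum_ite_eq]
  · simp [hE]

lemma condDist_nonneg' {p : Ω → ℝ} (hp : ∀ ω, 0 ≤ p ω) (Y : Ω → 𝒴) (E : Ω → Prop) (y : 𝒴) :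
    0 ≤ condDist p Y E y := div_nonneg (pr_nonneg' hp _) (pr_nonneg' hp _)

lemma condDist_sum {p : Ω → ℝ} (Y : Ω → 𝒴) (E : Ω → Prop) (h : pr p E ≠ 0) :
    ∑ y, condDist p Y E y = 1 := by
  unfold condDist
  rw [← Finset.sum_div, sum_pr_and, div_self h]

lemma chiSqDiv_nonneg' {P Q : 𝒴 → ℝ} (hQ : ∀ y, 0 ≤ Q y) : 0 ≤ chiSqDiv P Q :=
  Finset.sum_nonneg fun y _ => div_nonneg (sq_nonneg _) (hQ y)

lemma absdiff_le_sqrt_chiSq {P Q : 𝒴 → ℝ} (hQ : ∀ y, 0 ≤ Q y) (hQ1 : ∑ y, Q y = 1)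
    (hAC : ∀ y, Q y = 0 → P y = 0) :
    ∑ y, |P y - Q y| ≤ Real.sqrt (chiSqDiv P Q) := by
  have h := Finset.sum_sq_le_sum_mul_sum_of_sq_eq_mul Finset.univ
    (r := fun y => |P y - Q y|) (f := fun y => (P y - Q y) ^ 2 / Q y) (g := Q)
    (fun y _ => div_nonneg (sq_nonneg _) (hQ y)) (fun y _ => hQ y)
    (fun y _ => by
      by_cases h0 : Q y = 0
      · simp [h0, hAC y h0]
      · rw [sq_abs, div_mul_cancel₀ _ h0])
  rw [hQ1, mul_one] at h
  have hnn : 0 ≤ ∑ y, |P y - Q y| := Finset.sum_nonneg fun y _ => abs_nonneg _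
  calc ∑ y, |P y - Q y| = Real.sqrt ((∑ y, |P y - Q y|) ^ 2) := (Real.sqrt_sq hnn).symm
    _ ≤ Real.sqrt (chiSqDiv P Q) := Real.sqrt_le_sqrt h

lemma expLoss_diff_le {L : 𝒴 → 𝒜 → ℝ} {M : ℝ} (hL : ∀ y a, |L y a| ≤ M)
    (P Q : 𝒴 → ℝ) (a : 𝒜) :
    expLoss L P a - expLoss L Q a ≤ M * ∑ y, |P y - Q y| := by
  unfold expLoss
  rw [← Finset.sum_sub_distrib, Finset.mul_sum]
  refine Finset.sum_le_sum fun y _ => ?_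
  have h1 : P y * L y a - Q y * L y a = (P y - Q y) * L y a := by ring
  rw [h1]
  calc (P y - Q y) * L y a ≤ |(P y - Q y) * L y a| := le_abs_self _
    _ = |P y - Q y| * |L y a| := abs_mul _ _
    _ ≤ |P y - Q y| * M := mul_le_mul_of_nonneg_left (hL y a) (abs_nonneg _)
    _ = M * |P y - Q y| := mul_comm _ _

lemma Ldiv_le_sqrt {L : 𝒴 → 𝒜 → ℝ} {M : ℝ} (hL : ∀ y a, |L y a| ≤ M)
    {b : (𝒴 → ℝ) → 𝒜} (hb : IsBayesSelector L b) {P Q : 𝒴 → ℝ}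
    (hP0 : ∀ y, 0 ≤ P y) (hP1 : ∑ y, P y = 1)
    (hQ0 : ∀ y, 0 ≤ Q y) (hQ1 : ∑ y, Q y = 1)
    (hAC : ∀ y, Q y = 0 → P y = 0) :
    Ldiv L b P Q ≤ 2 * M * Real.sqrt (chiSqDiv P Q) := by
  have h𝒴 : Nonempty 𝒴 := by
    by_contra h
    rw [not_nonempty_iff] at h
    rw [Finset.univ_eq_empty, Finset.sum_empty] at hP1
    norm_num at hP1
  have hM : 0 ≤ M := le_trans (abs_nonneg _) (hL (Classical.arbitrary 𝒴) (b P))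
  have hQb := hb Q hQ0 hQ1 (b P)
  have S := absdiff_le_sqrt_chiSq hQ0 hQ1 hAC
  have h1 := expLoss_diff_le hL P Q (b Q)
  have h2 := expLoss_diff_le hL Q P (b P)
  have h2' : expLoss L Q (b P) - expLoss L P (b P) ≤ M * ∑ y, |P y - Q y| := by
    simpa [abs_sub_comm] using h2
  have hS : M * (∑ y, |P y - Q y|) ≤ M * Real.sqrt (chiSqDiv P Q) :=
    mul_le_mul_of_nonneg_left S hM
  unfold Ldiv
  nlinarith [hQb, h1, h2', hS]

lemma sum_pr_fiber {p : Ω → ℝ} (Z : Ω → 𝒵) (E : Ω → Prop) :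
    ∑ z, pr p (fun ω => E ω ∧ Z ω = z) = pr p E := by
  unfold pr
  rw [Finset.sum_comm]
  refine Finset.sum_congr rfl fun ω _ => ?_
  by_cases hE : E ω
  · simp [hE, Finset.sum_ite_eq]
  · simp [hE]

lemma sum_pr_eq {p : Ω → ℝ} (X : Ω → 𝒳) :
    ∑ x, pr p (fun ω => X ω = x) = ∑ ω, p ω := by
  unfold pr
  rw [Finset.sum_comm]
  refine Finset.sum_congr rfl fun ω _ => ?_
  simp [Finset.sum_ite_eq]

end AuxLemmas

/-- If `I_{χ²}(Y;Z|X) ≤ ε²` and `|L(y,a)| ≤ M`, then for any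
choice of Bayes actions, `I_L(Y;Z|X) ≤ 2Mε √(|𝒳|·|𝒵|)`. -/
theorem LCMI_le_of_chiSqCMI_le {Ω 𝒳 𝒴 𝒵 𝒜 : Type*} [Fintype Ω] [Fintype 𝒳]
    [Fintype 𝒴] [Fintype 𝒵]
    (L : 𝒴 → 𝒜 → ℝ) (M : ℝ) (hL : ∀ y a, |L y a| ≤ M)
    (b : (𝒴 → ℝ) → 𝒜) (hb : IsBayesSelector L b)
    (p : Ω → ℝ) (hp : ∀ ω, 0 ≤ p ω) (hsum : ∑ ω, p ω = 1)
    (X : Ω → 𝒳) (Y : Ω → 𝒴) (Z : Ω → 𝒵)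
    (ε : ℝ) (hε : 0 ≤ ε) (hchi : chiSqCMI p Y Z X ≤ ε ^ 2) :
    LCMI L b p Y Z X
      ≤ 2 * M * ε * Real.sqrt ((Fintype.card 𝒳 : ℝ) * (Fintype.card 𝒵 : ℝ)) := by
  classical
  have hΩ : Nonempty Ω := by
    by_contra h
    rw [not_nonempty_iff] at h
    rw [Finset.univ_eq_empty, Finset.sum_empty] at hsum
    norm_num at hsum
  obtain ⟨ω₀⟩ := hΩ
  have hM : 0 ≤ M := le_trans (abs_nonneg _)
    (hL (Y ω₀) (b (condDist p Y (fun _ => True))))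
  set P : 𝒳 → 𝒵 → 𝒴 → ℝ := fun x z => condDist p Y (fun ω => X ω = x ∧ Z ω = z) with hP
  set Q : 𝒳 → 𝒴 → ℝ := fun x => condDist p Y (fun ω => X ω = x) with hQ
  set w : 𝒳 → 𝒵 → ℝ := fun x z => pr p (fun ω => X ω = x ∧ Z ω = z) with hw
  set D : 𝒳 → 𝒵 → ℝ := fun x z => chiSqDiv (P x z) (Q x) with hD
  have hw0 : ∀ x z, 0 ≤ w x z := fun x z => pr_nonneg' hp _
  have hD0 : ∀ x z, 0 ≤ D x z := fun x z =>
    chiSqDiv_nonneg' (fun y => condDist_nonneg' hp _ _ _)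
  -- termwise bound
  have term : ∀ x z, w x z * Ldiv L b (P x z) (Q x) ≤ 2 * M * (w x z * Real.sqrt (D x z)) := by
    intro x z
    by_cases hwz : w x z = 0
    · simp [hwz]
    · have hwpos : 0 < w x z := lt_of_le_of_ne (hw0 x z) (Ne.symm hwz)
      have hx : pr p (fun ω => X ω = x) ≠ 0 := by
        have hle : w x z ≤ pr p (fun ω => X ω = x) :=
          pr_mono' (E := fun ω => X ω = x ∧ Z ω = z) (F := fun ω => X ω = x) hp
            (fun ω h => h.1)
        intro h0
        rw [h0] at hle
        linarith
      have hP1 : ∑ y, P x z y = 1 := condDist_sum _ _ hwz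
      have hQ1 : ∑ y, Q x y = 1 := condDist_sum _ _ hx
      have hAC : ∀ y, Q x y = 0 → P x z y = 0 := by
        intro y hy
        have hnum : pr p (fun ω => Y ω = y ∧ X ω = x) = 0 := by
          rw [hQ] at hy
          simp only [condDist] at hy
          rcases div_eq_zero_iff.mp hy with h | h
          · exact h
          · exact absurd h hx
        have hz : pr p (fun ω => Y ω = y ∧ X ω = x ∧ Z ω = z) = 0 :=
          pr_eq_zero_of hp (fun ω h => ⟨h.1, h.2.1⟩) hnum
        simp only [hP, condDist, hz, zero_div]
      have hld := Ldiv_le_sqrt hL hb (fun y => condDist_nonneg' hp _ _ _) hP1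
        (fun y => condDist_nonneg' hp _ _ _) hQ1 hAC
      calc w x z * Ldiv L b (P x z) (Q x)
          ≤ w x z * (2 * M * Real.sqrt (D x z)) :=
            mul_le_mul_of_nonneg_left hld (hw0 x z)
        _ = 2 * M * (w x z * Real.sqrt (D x z)) := by ring
  have hsumw : ∑ x, ∑ z, w x z = 1 := by
    have h1 : ∀ x, ∑ z, w x z = pr p (fun ω => X ω = x) := by
      intro x
      simpa using sum_pr_fiber (p := p) Z (fun ω => X ω = x)
    simp only [h1]
    rw [sum_pr_eq, hsum]
  have hsumχ : ∑ x, ∑ z, w x z * D x z ≤ ε ^ 2 := by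
    have heq : chiSqCMI p Y Z X = ∑ x, ∑ z, w x z * D x z := by
      unfold chiSqCMI
      simp only [hw, hD, hP, hQ]
    rw [← heq]
    exact hchi
  have CS := Finset.sum_sq_le_sum_mul_sum_of_sq_eq_mul (Finset.univ : Finset (𝒳 × 𝒵))
    (r := fun q => w q.1 q.2 * Real.sqrt (D q.1 q.2))
    (f := fun q => w q.1 q.2)
    (g := fun q => w q.1 q.2 * D q.1 q.2)
    (fun q _ => hw0 q.1 q.2)
    (fun q _ => mul_nonneg (hw0 q.1 q.2) (hD0 q.1 q.2))
    (fun q _ => by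
      rw [mul_pow, Real.sq_sqrt (hD0 q.1 q.2)]
      ring)
  rw [Fintype.sum_prod_type, Fintype.sum_prod_type, Fintype.sum_prod_type] at CS
  have hkey : ∑ x, ∑ z, w x z * Real.sqrt (D x z) ≤ ε := by
    have hnn : 0 ≤ ∑ x, ∑ z, w x z * Real.sqrt (D x z) :=
      Finset.sum_nonneg fun x _ => Finset.sum_nonneg fun z _ =>
        mul_nonneg (hw0 x z) (Real.sqrt_nonneg _)
    have h2 : (∑ x, ∑ z, w x z * Real.sqrt (D x z)) ^ 2 ≤ ε ^ 2 := by
      calc (∑ x, ∑ z, w x z * Real.sqrt (D x z)) ^ 2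
          ≤ (∑ x, ∑ z, w x z) * ∑ x, ∑ z, w x z * D x z := CS
        _ = ∑ x, ∑ z, w x z * D x z := by rw [hsumw, one_mul]
        _ ≤ ε ^ 2 := hsumχ
    calc ∑ x, ∑ z, w x z * Real.sqrt (D x z)
        = Real.sqrt ((∑ x, ∑ z, w x z * Real.sqrt (D x z)) ^ 2) := (Real.sqrt_sq hnn).symm
      _ ≤ Real.sqrt (ε ^ 2) := Real.sqrt_le_sqrt h2
      _ = ε := by rw [Real.sqrt_sq hε]
  have hL1 : LCMI L b p Y Z X ≤ 2 * M * ∑ x, ∑ z, w x z * Real.sqrt (D x z) := by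
    unfold LCMI
    rw [Finset.mul_sum]
    refine Finset.sum_le_sum fun x _ => ?_
    rw [Finset.mul_sum]
    exact Finset.sum_le_sum fun z _ => term x z
  have hfin : 2 * M * ∑ x, ∑ z, w x z * Real.sqrt (D x z) ≤ 2 * M * ε :=
    mul_le_mul_of_nonneg_left hkey (by linarith)
  have h𝒳 : (1 : ℝ) ≤ (Fintype.card 𝒳 : ℝ) := by
    have : 0 < Fintype.card 𝒳 := Fintype.card_pos_iff.mpr ⟨X ω₀⟩
    exact_mod_cast this
  have h𝒵 : (1 : ℝ) ≤ (Fintype.card 𝒵 : ℝ) := by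
    have : 0 < Fintype.card 𝒵 := Fintype.card_pos_iff.mpr ⟨Z ω₀⟩
    exact_mod_cast this
  have hsq : 1 ≤ Real.sqrt ((Fintype.card 𝒳 : ℝ) * (Fintype.card 𝒵 : ℝ)) := by
    rw [show (1 : ℝ) = Real.sqrt 1 from (Real.sqrt_one).symm]
    exact Real.sqrt_le_sqrt (by nlinarith)
  calc LCMI L b p Y Z X ≤ 2 * M * ε := le_trans hL1 hfin
    _ ≤ 2 * M * ε * Real.sqrt ((Fintype.card 𝒳 : ℝ) * (Fintype.card 𝒵 : ℝ)) :=
        le_mul_of_one_le_right (by positivity) hsq
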